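/- arXiv:2311.11869 — 2 statements merged into one kernel-verified Lean document; each statement's English description precedes it below -/
import Mathlib

section
/- Let APX, OPT be triangle-free 2-matchings of G with |N_APX(u)| ≤ |N_OPT(u)| for all u, and let P_1,...,P_{k-1} be edge-disjoint augmenting trails in APX △ OPT with P = P_1 ∪ ... ∪ P_{k-1}. If a vertex w satisfies |N_{APX \ P}(w)| < |N_{OPT \ P}(w)| (w is deficient with respect to P), then |N_APX(w)| < |N_OPT(w)| (w is deficient). -/
open Finset symmDiff

variable {V : Type*}

/-- Neighbors of `u` via edges in `S`. -/
def nbrs [Fintype V] [DecidableEq V] (S : Finset (Sym2 V)) (u : V) : Finset V :=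
  Finset.univ.filter (fun v => s(u, v) ∈ S)

/-- `M` is a (simple) 2-matching of `G`: a set of edges of `G` giving each vertex degree ≤ 2. -/
def Is2Matching [Fintype V] [DecidableEq V] (G : SimpleGraph V) [DecidableRel G.Adj]
    (M : Finset (Sym2 V)) : Prop :=
  M ⊆ G.edgeFinset ∧ ∀ u : V, (nbrs M u).card ≤ 2

/-- The edge set `S` contains a triangle. -/
def HasTriangle [DecidableEq V] (S : Finset (Sym2 V)) : Prop :=
  ∃ a b c : V, a ≠ b ∧ b ≠ c ∧ a ≠ c ∧ s(a, b) ∈ S ∧ s(b, c) ∈ S ∧ s(a, c) ∈ S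

/-- A triangle-free 2-matching. -/
def IsTF2M [Fintype V] [DecidableEq V] (G : SimpleGraph V) [DecidableRel G.Adj]
    (M : Finset (Sym2 V)) : Prop :=
  Is2Matching G M ∧ ¬ HasTriangle M

/-- The list of edges of a trail given by its vertex sequence. -/
def trailEdges (vs : List V) : List (Sym2 V) :=
  List.zipWith (fun a b => s(a, b)) vs vs.tail

/-- A trail: at least one edge, consecutive vertices distinct, all edges distinct. -/
def IsTrail [DecidableEq V] (vs : List V) : Prop :=
  2 ≤ vs.length ∧ vs.Chain' (· ≠ ·) ∧ (trailEdges vs).Nodup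

/-- Edge set of a trail. -/
def edgesOf [DecidableEq V] (vs : List V) : Finset (Sym2 V) :=
  (trailEdges vs).toFinset

/-- An alternating trail w.r.t. `M`: edges alternate between `M` and its complement. -/
def IsAlternating [DecidableEq V] (M : Finset (Sym2 V)) (vs : List V) : Prop :=
  IsTrail vs ∧ (trailEdges vs).Chain' (fun e f => e ∈ M ↔ f ∉ M)

/-- An augmenting trail for `M`: alternating, and `M ∆ P` is a triangle-free 2-matching
of size `|M| + 1`. -/
def IsAugmenting [Fintype V] [DecidableEq V] (G : SimpleGraph V) [DecidableRel G.Adj]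
    (M : Finset (Sym2 V)) (vs : List V) : Prop :=
  IsAlternating M vs ∧ IsTF2M G (M ∆ edgesOf vs) ∧ (M ∆ edgesOf vs).card = M.card + 1

/-- The first edge of the trail `vs` belongs to `S`. -/
def FirstEdgeIn [DecidableEq V] (vs : List V) (S : Finset (Sym2 V)) : Prop :=
  ∃ e ∈ S, (trailEdges vs).head? = some e

/-- The last edge of the trail `vs` belongs to `S`. -/
def LastEdgeIn [DecidableEq V] (vs : List V) (S : Finset (Sym2 V)) : Prop :=
  ∃ e ∈ S, (trailEdges vs).getLast? = some e

/-- `u` is deficient w.r.t. `E'`. -/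
def Deficient [Fintype V] [DecidableEq V] (APX OPT E' : Finset (Sym2 V)) (u : V) : Prop :=
  (nbrs (APX \ E') u).card < (nbrs (OPT \ E') u).card

/-- `a b c` form a triangle in the edge set `S`. -/
def TriIn [DecidableEq V] (S : Finset (Sym2 V)) (a b c : V) : Prop :=
  a ≠ b ∧ b ≠ c ∧ a ≠ c ∧ s(a, b) ∈ S ∧ s(b, c) ∈ S ∧ s(a, c) ∈ S

/- ### Auxiliary lemmas -/

lemma nbrs_card_eq [Fintype V] [DecidableEq V] (S : Finset (Sym2 V)) (w : V) :
    (nbrs S w).card = (S.filter (fun e => w ∈ e)).card := by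
  apply Finset.card_bij (fun v _ => s(w, v))
  · intro v hv
    simp only [nbrs, Finset.mem_filter, Finset.mem_univ, true_and] at hv
    simp [hv]
  · intro a ha b hb h
    rcases Sym2.eq_iff.mp h with ⟨-, h⟩ | ⟨h1, h2⟩
    · exact h
    · rw [← h1, h2]
  · intro e he
    simp only [Finset.mem_filter] at he
    refine ⟨Sym2.Mem.other he.2, ?_, ?_⟩
    · simp [nbrs, Sym2.other_spec he.2, he.1]
    · exact Sym2.other_spec he.2

lemma countP_toFinset [DecidableEq V] (L : List (Sym2 V)) (hnd : L.Nodup)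
    (p : Sym2 V → Prop) [DecidablePred p] :
    (L.toFinset.filter p).card = L.countP (fun e => decide (p e)) := by
  have : L.toFinset.filter p = (L.filter (fun e => decide (p e))).toFinset := by
    rw [List.toFinset_filter]; congr 1; ext x; simp
  rw [this, List.card_toFinset, (hnd.filter _).dedup, List.countP_eq_length_filter]

lemma lemC [DecidableEq V] (M : Finset (Sym2 V)) :
    ∀ L : List (Sym2 V),
      L.Chain' (fun e f => e ∈ M ↔ f ∉ M) →
      L.countP (fun e => decide (e ∉ M)) = L.countP (fun e => decide (e ∈ M)) + 1 →
      (∀ e ∈ L.head?, e ∉ M) ∧ (∀ e ∈ L.getLast?, e ∉ M)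
  | [] => by simp
  | [e] => by
      intro _ hcnt
      by_cases he : e ∈ M
      · simp [List.countP_cons, he] at hcnt
      · simp [he]
  | e :: f :: t => by
      intro hc hcnt
      have hef : e ∈ M ↔ f ∉ M := (List.isChain_cons_cons.mp hc).1
      have hct : (f :: t).Chain' (fun e f => e ∈ M ↔ f ∉ M) := (List.isChain_cons_cons.mp hc).2
      have hcnt' : t.countP (fun e => decide (e ∉ M)) = t.countP (fun e => decide (e ∈ M)) + 1 := by
        by_cases he : e ∈ M
        · have hf : f ∉ M := hef.mp he
          simp [List.countP_cons, he, hf] at hcnt ⊢; omega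
        · have hf : f ∈ M := not_not.mp (fun hf => he (hef.mpr hf))
          simp [List.countP_cons, he, hf] at hcnt ⊢; omega
      match t with
      | [] => simp at hcnt'
      | g :: t' =>
        have IH := lemC M (g :: t') (List.isChain_cons_cons.mp hct).2 hcnt'
        have hg : g ∉ M := by simpa using IH.1
        have hf : f ∈ M := (List.isChain_cons_cons.mp hct).1.mpr hg
        have he : e ∉ M := fun he => (hef.mp he) hf
        refine ⟨by simpa using he, ?_⟩
        have : (e :: f :: g :: t').getLast? = (g :: t').getLast? := by
          simp [List.getLast?_cons_cons]
        rw [this]; exact IH.2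

lemma key [DecidableEq V] (M : Finset (Sym2 V)) (w : V) :
    ∀ vs : List V, vs.Chain' (· ≠ ·) →
      (trailEdges vs).Chain' (fun e f => e ∈ M ↔ f ∉ M) →
      (∀ e ∈ (trailEdges vs).getLast?, e ∉ M) →
      ((∃ e, (trailEdges vs).head? = some e ∧ e ∉ M) →
        (trailEdges vs).countP (fun e => decide (w ∈ e ∧ e ∈ M))
          + (if vs.head? = some w then 1 else 0)
          ≤ (trailEdges vs).countP (fun e => decide (w ∈ e ∧ e ∉ M))) ∧
      ((∃ e, (trailEdges vs).head? = some e ∧ e ∈ M) →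
        (trailEdges vs).countP (fun e => decide (w ∈ e ∧ e ∈ M))
          ≤ (trailEdges vs).countP (fun e => decide (w ∈ e ∧ e ∉ M))
            + (if vs.head? = some w then 1 else 0))
  | [] => by intro _ _ _; constructor <;> (rintro ⟨e, he, -⟩; simp [trailEdges] at he)
  | [a] => by intro _ _ _; constructor <;> (rintro ⟨e, he, -⟩; simp [trailEdges] at he)
  | a :: b :: t => by
    intro hne halt hlast
    have hedge : trailEdges (a :: b :: t) = s(a, b) :: trailEdges (b :: t) := rfl
    have hab : a ≠ b := (List.isChain_cons_cons.mp hne).1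
    have hne' : (b :: t).Chain' (· ≠ ·) := (List.isChain_cons_cons.mp hne).2
    have halt' : (trailEdges (b :: t)).Chain' (fun e f => e ∈ M ↔ f ∉ M) := by
      rw [hedge] at halt; exact (List.isChain_cons.mp halt).2
    constructor
    · rintro ⟨e, he, heM⟩
      rw [hedge] at he; simp only [List.head?_cons, Option.some.injEq] at he
      subst he
      match t with
      | [] =>
        simp only [trailEdges, List.zipWith, List.countP_cons, List.countP_nil,
          List.head?_cons, Option.some.injEq]
        by_cases haw : a = w
        · subst haw; simp [heM, Sym2.mem_iff]
        · simp [heM, fun h : a = w => haw h]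
      | c :: t' =>
        have hedge2 : trailEdges (b :: c :: t') = s(b, c) :: trailEdges (c :: t') := rfl
        have he1 : s(b, c) ∈ M := by
          rw [hedge, hedge2] at halt
          have h2 := (List.isChain_cons_cons.mp halt).1
          by_contra h; exact heM (h2.mpr h)
        have hlast' : ∀ e ∈ (trailEdges (b :: c :: t')).getLast?, e ∉ M := by
          intro e he'
          apply hlast
          rw [hedge, hedge2]
          rw [hedge2] at he'
          simpa [List.getLast?_cons_cons] using he'
        have IH := (key M w (b :: c :: t') hne' halt' hlast').2
          ⟨s(b, c), by rw [hedge2]; simp, he1⟩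
        rw [hedge, List.countP_cons, List.countP_cons]
        simp only [List.head?_cons, Option.some.injEq] at IH ⊢
        by_cases haw : a = w <;> by_cases hbw : b = w
        · exact absurd (haw.trans hbw.symm) hab
        · subst haw
          simp only [hbw] at IH
          simp [heM, hbw, Sym2.mem_iff] at IH ⊢; omega
        · subst hbw
          simp [heM, haw, Sym2.mem_iff, fun h : a = b => hab h] at IH ⊢; omega
        · have haw' : ¬ (w = a) := fun h => haw h.symm
          have hbw' : ¬ (w = b) := fun h => hbw h.symm
          simp [heM, haw, hbw, haw', hbw', Sym2.mem_iff] at IH ⊢; omega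
    · rintro ⟨e, he, heM⟩
      rw [hedge] at he; simp only [List.head?_cons, Option.some.injEq] at he
      subst he
      match t with
      | [] =>
        exfalso
        exact hlast s(a, b) (by simp [trailEdges]) heM
      | c :: t' =>
        have hedge2 : trailEdges (b :: c :: t') = s(b, c) :: trailEdges (c :: t') := rfl
        have he1 : s(b, c) ∉ M := by
          rw [hedge, hedge2] at halt
          exact (List.isChain_cons_cons.mp halt).1.mp heM
        have hlast' : ∀ e ∈ (trailEdges (b :: c :: t')).getLast?, e ∉ M := by
          intro e he'
          apply hlast
          rw [hedge, hedge2]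
          rw [hedge2] at he'
          simpa [List.getLast?_cons_cons] using he'
        have IH := (key M w (b :: c :: t') hne' halt' hlast').1
          ⟨s(b, c), by rw [hedge2]; simp, he1⟩
        rw [hedge, List.countP_cons, List.countP_cons]
        simp only [List.head?_cons, Option.some.injEq] at IH ⊢
        by_cases haw : a = w <;> by_cases hbw : b = w
        · exact absurd (haw.trans hbw.symm) hab
        · subst haw
          simp only [hbw] at IH
          simp [heM, hbw, Sym2.mem_iff] at IH ⊢; omega
        · subst hbw
          simp [heM, haw, Sym2.mem_iff, fun h : a = b => hab h] at IH ⊢; omega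
        · have haw' : ¬ (w = a) := fun h => haw h.symm
          have hbw' : ¬ (w = b) := fun h => hbw h.symm
          simp [heM, haw, hbw, haw', hbw', Sym2.mem_iff] at IH ⊢; omega

lemma trail_bound [Fintype V] [DecidableEq V] (G : SimpleGraph V) [DecidableRel G.Adj]
    (M : Finset (Sym2 V)) (vs : List V) (h : IsAugmenting G M vs) (w : V) :
    ((edgesOf vs ∩ M).filter (fun e => w ∈ e)).card
      ≤ ((edgesOf vs \ M).filter (fun e => w ∈ e)).card := by
  obtain ⟨⟨⟨hlen, hchain, hnd⟩, halt⟩, -, hcard⟩ := h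
  have hsd : (edgesOf vs \ M).card = (edgesOf vs ∩ M).card + 1 := by
    have h1 : (M ∆ edgesOf vs).card = (M \ edgesOf vs).card + (edgesOf vs \ M).card := by
      rw [symmDiff_def, sup_eq_union, Finset.card_union_of_disjoint disjoint_sdiff_sdiff]
    have h2 : (M ∩ edgesOf vs).card + (M \ edgesOf vs).card = M.card :=
      Finset.card_inter_add_card_sdiff M (edgesOf vs)
    have h3 : (edgesOf vs ∩ M).card = (M ∩ edgesOf vs).card := by rw [Finset.inter_comm]
    omega
  have hEi : edgesOf vs ∩ M = (trailEdges vs).toFinset.filter (fun e => e ∈ M) := by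
    ext e; simp [edgesOf]
  have hEs : edgesOf vs \ M = (trailEdges vs).toFinset.filter (fun e => e ∉ M) := by
    ext e; simp [edgesOf]
  have hcnt : (trailEdges vs).countP (fun e => decide (e ∉ M))
      = (trailEdges vs).countP (fun e => decide (e ∈ M)) + 1 := by
    rw [← countP_toFinset (trailEdges vs) hnd (fun e => e ∉ M),
      ← countP_toFinset (trailEdges vs) hnd (fun e => e ∈ M), ← hEi, ← hEs]
    exact hsd
  have hends := lemC M (trailEdges vs) halt hcnt
  have hLne : trailEdges vs ≠ [] := by
    have hl : (trailEdges vs).length = min vs.length vs.tail.length := List.length_zipWith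
    have ht : vs.tail.length = vs.length - 1 := List.length_tail
    intro hnil
    rw [hnil] at hl
    simp only [List.length_nil] at hl
    omega
  obtain ⟨e0, L', hLcons⟩ : ∃ e0 L', trailEdges vs = e0 :: L' := by
    cases hE : trailEdges vs with
    | nil => exact absurd hE hLne
    | cons x xs => exact ⟨x, xs, rfl⟩
  have hhead : (trailEdges vs).head? = some e0 := by rw [hLcons]; rfl
  have hkey := (key M w vs hchain halt hends.2).1 ⟨e0, hhead, hends.1 e0 hhead⟩
  have hA : ((edgesOf vs ∩ M).filter (fun e => w ∈ e)).card
      = (trailEdges vs).countP (fun e => decide (w ∈ e ∧ e ∈ M)) := by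
    have : (edgesOf vs ∩ M).filter (fun e => w ∈ e)
        = (trailEdges vs).toFinset.filter (fun e => w ∈ e ∧ e ∈ M) := by
      ext e; simp [edgesOf]; tauto
    rw [this, countP_toFinset _ hnd]
  have hB : ((edgesOf vs \ M).filter (fun e => w ∈ e)).card
      = (trailEdges vs).countP (fun e => decide (w ∈ e ∧ e ∉ M)) := by
    have : (edgesOf vs \ M).filter (fun e => w ∈ e)
        = (trailEdges vs).toFinset.filter (fun e => w ∈ e ∧ e ∉ M) := by
      ext e; simp [edgesOf]; tauto
    rw [this, countP_toFinset _ hnd]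
  rw [hA, hB]
  omega

theorem stmt_6 [Fintype V] [DecidableEq V] (G : SimpleGraph V) [DecidableRel G.Adj]
    (APX OPT : Finset (Sym2 V))
    (hAPX : IsTF2M G APX) (hOPT : IsTF2M G OPT)
    (hdom : ∀ u : V, (nbrs APX u).card ≤ (nbrs OPT u).card)
    (k : ℕ) (p : Fin k → List V)
    (haug : ∀ i, IsAugmenting G APX (p i))
    (hsub : ∀ i, edgesOf (p i) ⊆ APX ∆ OPT)
    (hdisj : ∀ i j, i ≠ j → Disjoint (edgesOf (p i)) (edgesOf (p j))) :
    ∀ w : V,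
      Deficient APX OPT (Finset.univ.biUnion fun i => edgesOf (p i)) w →
      Deficient APX OPT ∅ w := by
  intro w hdef
  set P : Finset (Sym2 V) := Finset.univ.biUnion fun i => edgesOf (p i) with hP
  unfold Deficient at hdef ⊢
  rw [nbrs_card_eq, nbrs_card_eq] at hdef ⊢
  rw [Finset.sdiff_empty, Finset.sdiff_empty]
  have split : ∀ S : Finset (Sym2 V), (S.filter (fun e => w ∈ e)).card
      = ((S \ P).filter (fun e => w ∈ e)).card + ((S ∩ P).filter (fun e => w ∈ e)).card := by
    intro S
    rw [← Finset.card_union_of_disjoint, ← Finset.filter_union, Finset.sdiff_union_inter]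
    exact Finset.disjoint_filter_filter
      (Finset.sdiff_disjoint.mono_right Finset.inter_subset_right)
  have hsum : ∀ A : Finset (Sym2 V), ((A ∩ P).filter (fun e => w ∈ e)).card
      = ∑ i, ((A ∩ edgesOf (p i)).filter (fun e => w ∈ e)).card := by
    intro A
    have h1 : A ∩ P = Finset.univ.biUnion fun i => A ∩ edgesOf (p i) := by
      ext e; simp [hP, Finset.mem_biUnion]
    have h2 : ∀ i ∈ Finset.univ, ∀ j ∈ (Finset.univ : Finset (Fin k)), i ≠ j →
        Disjoint ((A ∩ edgesOf (p i)).filter (fun e => w ∈ e))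
          ((A ∩ edgesOf (p j)).filter (fun e => w ∈ e)) := by
      intro i _ j _ hij
      exact Finset.disjoint_filter_filter
        ((hdisj i j hij).mono Finset.inter_subset_right Finset.inter_subset_right)
    rw [h1, Finset.filter_biUnion, Finset.card_biUnion h2]
  have hper : ∀ i, ((APX ∩ edgesOf (p i)).filter (fun e => w ∈ e)).card
      ≤ ((OPT ∩ edgesOf (p i)).filter (fun e => w ∈ e)).card := by
    intro i
    have e1 : APX ∩ edgesOf (p i) = edgesOf (p i) ∩ APX := Finset.inter_comm _ _
    have h1 := trail_bound G APX (p i) (haug i) w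
    have h2 : edgesOf (p i) \ APX ⊆ OPT ∩ edgesOf (p i) := by
      intro e he
      rw [Finset.mem_sdiff] at he
      have := hsub i he.1
      rw [Finset.mem_symmDiff] at this
      rcases this with ⟨h3, -⟩ | ⟨h3, -⟩
      · exact absurd h3 he.2
      · exact Finset.mem_inter.mpr ⟨h3, he.1⟩
    calc ((APX ∩ edgesOf (p i)).filter (fun e => w ∈ e)).card
        = ((edgesOf (p i) ∩ APX).filter (fun e => w ∈ e)).card := by rw [e1]
      _ ≤ ((edgesOf (p i) \ APX).filter (fun e => w ∈ e)).card := h1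
      _ ≤ ((OPT ∩ edgesOf (p i)).filter (fun e => w ∈ e)).card :=
          Finset.card_le_card (Finset.filter_subset_filter _ h2)
  have hAP : ((APX ∩ P).filter (fun e => w ∈ e)).card
      ≤ ((OPT ∩ P).filter (fun e => w ∈ e)).card := by
    rw [hsum APX, hsum OPT]
    exact Finset.sum_le_sum (fun i _ => hper i)
  have h1 := split APX
  have h2 := split OPT
  omega
end

section
/- Let APX, OPT be triangle-free 2-matchings with |N_APX(u)| ≤ |N_OPT(u)| for all u. Let P_1,...,P_{k-1} be edge-disjoint augmenting trails in APX △ OPT, and let P_k be an alternating trail contained in (APX △ OPT) \ (P_1 ∪ ... ∪ P_{k-1}), starting with an edge of OPT \ APX, whose first node is deficient with respect to P_1 ∪ ... ∪ P_{k-1}. Then for every vertex u other than possibly the last node of P_k: |N_{APX △ P_k}(u)| ≤ 2. -/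
open Finset symmDiff

variable {V : Type*}

/-! ### Auxiliary lemmas -/

section AuxLemmas

lemma trailEdges_cons_cons (a b : V) (l : List V) :
    trailEdges (a :: b :: l) = s(a, b) :: trailEdges (b :: l) := rfl

variable [DecidableEq V]

lemma my_filter_toFinset_card {l : List (Sym2 V)} (hl : l.Nodup) (p : Sym2 V → Prop)
    [DecidablePred p] :
    (l.toFinset.filter p).card = l.countP (fun e => decide (p e)) := by
  rw [List.countP_eq_length_filter,
    ← List.toFinset_card_of_nodup (hl.filter (fun e => decide (p e))),
    List.toFinset_filter]
  congr 1
  ext e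
  simp

/-- Endpoint contribution of an alternating trail. -/
def hend (M : Finset (Sym2 V)) (u x : V) (e : Sym2 V) : ℤ :=
  if x = u then (if e ∈ M then -1 else 1) else 0

lemma hend_nonneg {M : Finset (Sym2 V)} {u x : V} {e : Sym2 V} (h : e ∉ M) :
    0 ≤ hend M u x e := by
  unfold hend
  rw [if_neg h]
  split <;> norm_num

lemma my_key (M : Finset (Sym2 V)) (u : V) : ∀ (rest : List V) (a b : V),
    (a :: b :: rest).Chain' (· ≠ ·) →
    (trailEdges (a :: b :: rest)).Chain' (fun e f => e ∈ M ↔ f ∉ M) →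
    ∀ x e, (a :: b :: rest).getLast? = some x →
      (trailEdges (a :: b :: rest)).getLast? = some e →
    ((trailEdges (a :: b :: rest)).countP (fun e => decide (u ∈ e ∧ e ∉ M)) : ℤ)
      = (trailEdges (a :: b :: rest)).countP (fun e => decide (u ∈ e ∧ e ∈ M))
        + hend M u a s(a, b) + hend M u x e := by
  intro rest
  induction rest with
  | nil =>
    intro a b hc ha x e hx he
    have hab : a ≠ b := List.isChain_pair.mp hc
    have hTE : trailEdges [a, b] = [s(a, b)] := rfl
    rw [hTE] at he ⊢
    simp only [List.getLast?_cons_cons, List.getLast?_singleton, Option.some_inj] at hx he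
    subst hx; subst he
    simp only [List.countP_cons, List.countP_nil]
    by_cases h1 : u = a <;> by_cases h2 : u = b <;>
      by_cases h3 : s(a, b) ∈ M <;>
      simp [hend, h1, h2, h3, Sym2.mem_iff, hab, Ne.symm hab, eq_comm] <;> omega
  | cons c rest' IH =>
    intro a b hc ha x e hx he
    have hc' := hc.tail
    have ha' : (trailEdges (b :: c :: rest')).Chain' (fun e f => e ∈ M ↔ f ∉ M) := by
      rw [trailEdges_cons_cons] at ha; exact ha.tail
    have halt : (s(a, b) ∈ M ↔ s(b, c) ∉ M) := by
      rw [trailEdges_cons_cons, trailEdges_cons_cons] at ha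
      exact (List.isChain_cons_cons.mp ha).1
    have hx' : (b :: c :: rest').getLast? = some x := by
      rwa [List.getLast?_cons_cons] at hx
    have he' : (trailEdges (b :: c :: rest')).getLast? = some e := by
      rw [trailEdges_cons_cons, trailEdges_cons_cons] at he
      rw [trailEdges_cons_cons]
      rwa [List.getLast?_cons_cons] at he
    have hab : a ≠ b := (List.isChain_cons_cons.mp hc).1
    have := IH b c hc' ha' x e hx' he'
    rw [trailEdges_cons_cons, List.countP_cons, List.countP_cons]
    push_cast
    rw [this]
    generalize hend M u x e = z
    by_cases h1 : u = a <;> by_cases h2 : u = b <;>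
      by_cases h3 : s(a, b) ∈ M <;> by_cases h4 : s(b, c) ∈ M <;>
      first
        | (exfalso; tauto)
        | (simp only [hend, h1, h2, h3, h4, Sym2.mem_iff, hab, Ne.symm hab, eq_comm,
            decide_eq_true_eq, if_true, if_false, not_true, not_false_iff, and_true,
            and_false, or_false, false_or, eq_self_iff_true, ite_true, ite_false] <;>
           simp [h1, h2, Ne.symm hab, hab, eq_comm] <;> omega)

lemma my_altQ (M : Finset (Sym2 V)) : ∀ l : List (Sym2 V),
    l.Chain' (fun e f => e ∈ M ↔ f ∉ M) →
    (l.countP (fun e => decide (e ∉ M)) ≤ l.countP (fun e => decide (e ∈ M)) + 1) ∧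
    (∀ e, l.head? = some e → e ∈ M →
      l.countP (fun e => decide (e ∉ M)) ≤ l.countP (fun e => decide (e ∈ M))) := by
  intro l
  induction l with
  | nil => simp
  | cons e l' IH =>
    intro hch
    obtain ⟨IH1, IH2⟩ := IH hch.tail
    rw [List.countP_cons, List.countP_cons]
    simp only [decide_not] at IH1 IH2 ⊢
    by_cases he : e ∈ M
    · constructor
      · simp [he]; omega
      · intro f hf hfM
        simp [he]; omega
    · have h1 : l'.countP (fun e => !decide (e ∈ M)) ≤ l'.countP (fun e => decide (e ∈ M)) := by
        match l', hch with
        | [], _ => simp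
        | f :: l'', hch =>
          have hrel : e ∈ M ↔ f ∉ M := (List.isChain_cons_cons.mp hch).1
          have hfM : f ∈ M := by tauto
          exact IH2 f rfl hfM
      constructor
      · simp [he]; omega
      · intro f hf hfM
        simp only [List.head?_cons, Option.some_inj] at hf
        exact absurd (hf ▸ hfM) he

lemma my_ends_not_mem (M : Finset (Sym2 V)) (l : List (Sym2 V))
    (hch : l.Chain' (fun e f => e ∈ M ↔ f ∉ M))
    (hcnt : l.countP (fun e => decide (e ∉ M)) = l.countP (fun e => decide (e ∈ M)) + 1) :
    (∀ e, l.head? = some e → e ∉ M) ∧ (∀ e, l.getLast? = some e → e ∉ M) := by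
  constructor
  · intro e he hm
    have := (my_altQ M l hch).2 e he hm
    omega
  · intro e he hm
    have hch' : l.reverse.Chain' (fun e f => e ∈ M ↔ f ∉ M) := by
      unfold List.Chain' at hch ⊢
      rw [List.isChain_reverse]
      refine hch.imp ?_
      intro a b h
      by_cases hb : b ∈ M <;> by_cases ha : a ∈ M <;> simp_all [flip]
    have hh : l.reverse.head? = some e := by rwa [List.head?_reverse]
    have := (my_altQ M l.reverse hch').2 e hh hm
    rw [List.countP_reverse, List.countP_reverse] at this
    omega

variable [Fintype V]

@[simp] lemma mem_nbrs {S : Finset (Sym2 V)} {u v : V} : v ∈ nbrs S u ↔ s(u, v) ∈ S := by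
  simp [nbrs]

lemma nbrs_card_filter (S : Finset (Sym2 V)) (u : V) :
    (nbrs S u).card = (S.filter (fun e => u ∈ e)).card := by
  apply Finset.card_bij (fun v _ => s(u, v))
  · intro v hv
    simp only [mem_nbrs] at hv
    simp [hv]
  · intro v₁ h₁ v₂ h₂ h
    rcases Sym2.eq_iff.mp h with ⟨_, h⟩ | ⟨h1, h2⟩
    · exact h
    · rw [← h1, h2]
  · intro e he
    simp only [Finset.mem_filter] at he
    induction e with
    | h x y =>
      rcases Sym2.mem_iff.mp he.2 with h | h
      · exact ⟨y, by simp only [mem_nbrs, h]; exact he.1, by rw [h]⟩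
      · exact ⟨x, by simp only [mem_nbrs, h, Sym2.eq_swap]; exact he.1, by rw [h, Sym2.eq_swap]⟩

lemma nbrs_inter_card_eq (S E : Finset (Sym2 V)) (u : V) :
    (nbrs (S ∩ E) u).card = (E.filter (fun e => u ∈ e ∧ e ∈ S)).card := by
  rw [nbrs_card_filter]
  congr 1
  ext e
  simp only [Finset.mem_filter, Finset.mem_inter]
  tauto

lemma nbrs_sdiff_card_eq (S E : Finset (Sym2 V)) (u : V) :
    (nbrs (E \ S) u).card = (E.filter (fun e => u ∈ e ∧ e ∉ S)).card := by
  rw [nbrs_card_filter]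
  congr 1
  ext e
  simp only [Finset.mem_filter, Finset.mem_sdiff]
  tauto

lemma nbrs_sdiff (S T : Finset (Sym2 V)) (u : V) :
    nbrs (S \ T) u = nbrs S u \ nbrs T u := by
  ext v; simp

lemma nbrs_inter (S T : Finset (Sym2 V)) (u : V) :
    nbrs (S ∩ T) u = nbrs S u ∩ nbrs T u := by
  ext v; simp

lemma nbrs_symmDiff (S T : Finset (Sym2 V)) (u : V) :
    nbrs (S ∆ T) u = nbrs S u ∆ nbrs T u := by
  ext v; simp [Finset.mem_symmDiff]

lemma card_symmDiff_add {α : Type*} [DecidableEq α] (X Y : Finset α) :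
    (X ∆ Y).card + (X ∩ Y).card = X.card + (Y \ X).card := by
  have h1 : (X ∆ Y).card = (X \ Y).card + (Y \ X).card := by
    rw [symmDiff_def]
    exact Finset.card_union_of_disjoint disjoint_sdiff_sdiff
  have h2 : (X \ Y).card + (X ∩ Y).card = X.card := Finset.card_sdiff_add_card_inter X Y
  omega

lemma nbrs_deg_split (S E : Finset (Sym2 V)) (u : V) :
    (nbrs (S ∆ E) u).card + (nbrs (S ∩ E) u).card
      = (nbrs S u).card + (nbrs (E \ S) u).card := by
  rw [nbrs_symmDiff, nbrs_inter, nbrs_sdiff]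
  exact card_symmDiff_add _ _

lemma nbrs_sdiff_split (S E : Finset (Sym2 V)) (u : V) :
    (nbrs (S \ E) u).card + (nbrs (S ∩ E) u).card = (nbrs S u).card := by
  rw [nbrs_sdiff, nbrs_inter]
  exact Finset.card_sdiff_add_card_inter _ _

lemma count_le_of_ends (M : Finset (Sym2 V)) (vs : List V) (hlen : 2 ≤ vs.length)
    (hch : vs.Chain' (· ≠ ·))
    (haltc : (trailEdges vs).Chain' (fun e f => e ∈ M ↔ f ∉ M))
    (hfirst : ∀ e, (trailEdges vs).head? = some e → e ∉ M)
    (hlaste : ∀ e, (trailEdges vs).getLast? = some e → e ∉ M)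
    (u : V) :
    (trailEdges vs).countP (fun e => decide (u ∈ e ∧ e ∈ M))
      ≤ (trailEdges vs).countP (fun e => decide (u ∈ e ∧ e ∉ M)) := by
  rcases vs with _ | ⟨a, _ | ⟨b, rest⟩⟩
  · simp at hlen
  · simp at hlen
  · have hTEne : trailEdges (a :: b :: rest) ≠ [] := by
      rw [trailEdges_cons_cons]; simp
    have hxl : (a :: b :: rest).getLast? = some ((a :: b :: rest).getLast (by simp)) :=
      List.getLast?_eq_getLast _
    have hel : (trailEdges (a :: b :: rest)).getLast?
        = some ((trailEdges (a :: b :: rest)).getLast hTEne) :=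
      List.getLast?_eq_getLast _
    have hk := my_key M u rest a b hch haltc _ _ hxl hel
    have hfe : s(a, b) ∉ M := hfirst _ (by rw [trailEdges_cons_cons]; rfl)
    have hle : (trailEdges (a :: b :: rest)).getLast hTEne ∉ M := hlaste _ hel
    have h1 := hend_nonneg (M := M) (u := u) (x := a) hfe
    have h2 := hend_nonneg (M := M) (u := u)
      (x := (a :: b :: rest).getLast (by simp)) hle
    omega

lemma count_eq_of_first (M : Finset (Sym2 V)) (vs : List V) (hlen : 2 ≤ vs.length)
    (hch : vs.Chain' (· ≠ ·))
    (haltc : (trailEdges vs).Chain' (fun e f => e ∈ M ↔ f ∉ M))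
    (u : V)
    (hfirst : ∀ e, (trailEdges vs).head? = some e → e ∉ M)
    (hlu : vs.getLast? ≠ some u) :
    ((trailEdges vs).countP (fun e => decide (u ∈ e ∧ e ∉ M)) : ℤ)
      = (trailEdges vs).countP (fun e => decide (u ∈ e ∧ e ∈ M))
        + (if vs.head? = some u then 1 else 0) := by
  rcases vs with _ | ⟨a, _ | ⟨b, rest⟩⟩
  · simp at hlen
  · simp at hlen
  · have hTEne : trailEdges (a :: b :: rest) ≠ [] := by
      rw [trailEdges_cons_cons]; simp
    have hxl : (a :: b :: rest).getLast? = some ((a :: b :: rest).getLast (by simp)) :=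
      List.getLast?_eq_getLast _
    have hel : (trailEdges (a :: b :: rest)).getLast?
        = some ((trailEdges (a :: b :: rest)).getLast hTEne) :=
      List.getLast?_eq_getLast _
    have hk := my_key M u rest a b hch haltc _ _ hxl hel
    have hfe : s(a, b) ∉ M := hfirst _ (by rw [trailEdges_cons_cons]; rfl)
    have hxu : (a :: b :: rest).getLast (by simp) ≠ u := by
      intro h
      exact hlu (by rw [hxl, h])
    have hz : hend M u ((a :: b :: rest).getLast (by simp))
        ((trailEdges (a :: b :: rest)).getLast hTEne) = 0 := by
      unfold hend
      rw [if_neg hxu]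
    have hh : hend M u a s(a, b) = if a = u then 1 else 0 := by
      unfold hend
      rw [if_neg hfe]
    rw [hk, hz, hh]
    by_cases hau : a = u <;> simp [hau]

end AuxLemmas

theorem stmt_7 [Fintype V] [DecidableEq V] (G : SimpleGraph V) [DecidableRel G.Adj]
    (APX OPT : Finset (Sym2 V))
    (hAPX : IsTF2M G APX) (hOPT : IsTF2M G OPT)
    (hdom : ∀ u : V, (nbrs APX u).card ≤ (nbrs OPT u).card)
    (k : ℕ) (p : Fin k → List V)
    (haug : ∀ i, IsAugmenting G APX (p i))
    (hsub : ∀ i, edgesOf (p i) ⊆ APX ∆ OPT)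
    (hdisj : ∀ i j, i ≠ j → Disjoint (edgesOf (p i)) (edgesOf (p j)))
    (pk : List V)
    (halt : IsAlternating APX pk)
    (hpksub : edgesOf pk ⊆ (APX ∆ OPT) \ (Finset.univ.biUnion fun i => edgesOf (p i)))
    (hfirstedge : FirstEdgeIn pk (OPT \ APX))
    (hfirstnode : ∀ u : V, pk.head? = some u →
      Deficient APX OPT (Finset.univ.biUnion fun i => edgesOf (p i)) u) :
    ∀ u : V, pk.getLast? ≠ some u →
      (nbrs (APX ∆ edgesOf pk) u).card ≤ 2 := by
  intro u hu
  obtain ⟨⟨hlen, hch, hnd⟩, haltc⟩ := halt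
  set E' : Finset (Sym2 V) := Finset.univ.biUnion (fun i => edgesOf (p i)) with hE'
  obtain ⟨e0, he0, he0h⟩ := hfirstedge
  have hfe : ∀ e, (trailEdges pk).head? = some e → e ∉ APX := by
    intro e he
    rw [he0h] at he
    rw [← Option.some_inj.mp he]
    exact (Finset.mem_sdiff.mp he0).2
  have hkey := count_eq_of_first APX pk hlen hch haltc u hfe hu
  have hA : (nbrs (APX ∩ edgesOf pk) u).card
      = (trailEdges pk).countP (fun e => decide (u ∈ e ∧ e ∈ APX)) := by
    rw [nbrs_inter_card_eq, edgesOf, my_filter_toFinset_card hnd]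
  have hB : (nbrs (edgesOf pk \ APX) u).card
      = (trailEdges pk).countP (fun e => decide (u ∈ e ∧ e ∉ APX)) := by
    rw [nbrs_sdiff_card_eq, edgesOf, my_filter_toFinset_card hnd]
  have hsplit := nbrs_deg_split APX (edgesOf pk) u
  have hdegA : (nbrs APX u).card ≤ 2 := hAPX.1.2 u
  by_cases hhead : pk.head? = some u
  · -- the first node case: use deficiency to get degree ≤ 1
    have hdef : (nbrs (APX \ E') u).card < (nbrs (OPT \ E') u).card := hfirstnode u hhead
    have e1 := nbrs_sdiff_split APX E' u
    have e2 := nbrs_sdiff_split OPT E' u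
    have hOd : (nbrs OPT u).card ≤ 2 := hOPT.1.2 u
    have hωκ : (nbrs (E' \ APX) u).card ≤ (nbrs (OPT ∩ E') u).card := by
      apply Finset.card_le_card
      intro v hv
      rw [mem_nbrs] at hv ⊢
      rcases Finset.mem_sdiff.mp hv with ⟨hvE, hvA⟩
      refine Finset.mem_inter.mpr ⟨?_, hvE⟩
      obtain ⟨i, _, hi⟩ := Finset.mem_biUnion.mp hvE
      rcases Finset.mem_symmDiff.mp (hsub i hi) with ⟨h, _⟩ | ⟨h, _⟩
      · exact absurd h hvA
      · exact h
    have hαω : (nbrs (APX ∩ E') u).card ≤ (nbrs (E' \ APX) u).card := by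
      rw [nbrs_inter_card_eq, nbrs_sdiff_card_eq, hE', Finset.filter_biUnion,
        Finset.filter_biUnion]
      rw [Finset.card_biUnion, Finset.card_biUnion]
      · apply Finset.sum_le_sum
        intro i _
        obtain ⟨⟨⟨hlen_i, hch_i, hnd_i⟩, haltc_i⟩, _, hcard_i⟩ := haug i
        have hsd := card_symmDiff_add APX (edgesOf (p i))
        rw [hcard_i] at hsd
        have hc1 : (edgesOf (p i) \ APX).card
            = (trailEdges (p i)).countP (fun e => decide (e ∉ APX)) := by
          rw [Finset.sdiff_eq_filter, edgesOf, my_filter_toFinset_card hnd_i]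
        have hc2 : (APX ∩ edgesOf (p i)).card
            = (trailEdges (p i)).countP (fun e => decide (e ∈ APX)) := by
          rw [← my_filter_toFinset_card hnd_i (fun e => e ∈ APX)]
          congr 1
          ext e
          simp only [Finset.mem_filter, Finset.mem_inter, edgesOf, List.mem_toFinset]
          tauto
        have htot : (trailEdges (p i)).countP (fun e => decide (e ∉ APX))
            = (trailEdges (p i)).countP (fun e => decide (e ∈ APX)) + 1 := by
          omega
        have hends := my_ends_not_mem APX (trailEdges (p i)) haltc_i htot
        have := count_le_of_ends APX (p i) hlen_i hch_i haltc_i hends.1 hends.2 u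
        rw [edgesOf, my_filter_toFinset_card hnd_i, my_filter_toFinset_card hnd_i]
        exact this
      · intro i _ j _ hij
        exact Finset.disjoint_filter_filter (hdisj i j hij)
      · intro i _ j _ hij
        exact Finset.disjoint_filter_filter (hdisj i j hij)
    rw [if_pos hhead] at hkey
    omega
  · rw [if_neg hhead, add_zero] at hkey
    omega
end
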